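/- Under the two-component Gaussian mixture model x ∼ α_1 N_p(μ_1, Σ) + α_2 N_p(μ_2, Σ) with α_1 ∈ {1/2 − 1/√12, 1/2 + 1/√12}, the excess kurtosis of every projection vanishes: κ(u) − 3 = 0 for all unit vectors u, where κ(u) = E[(u'(x − Ex))^4]/(E[(u'(x − Ex))^2])^2. -/

import Mathlib

open MeasureTheory ProbabilityTheory Matrix

/-- A `p`-variate Gaussian measure with mean `m` and covariance `S` (positive semidefinite),
realized as the pushforward of a standard Gaussian by `w ↦ m + S^{1/2} w`. -/
noncomputable def mvGaussian {p : ℕ} (m : Fin p → ℝ) {S : Matrix (Fin p) (Fin p) ℝ}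
    (hS : S.PosSemidef) : Measure (Fin p → ℝ) :=
  (Measure.pi fun _ : Fin p => gaussianReal 0 1).map fun w => m + ((hS.1.eigenvectorUnitary : Matrix (Fin p) (Fin p) ℝ) *
      diagonal (((↑) : ℝ → ℝ) ∘ (√·) ∘ hS.1.eigenvalues) *
      (star hS.1.eigenvectorUnitary : Matrix (Fin p) (Fin p) ℝ)).mulVec w


/-! Projecting onto `u` turns the mixture into the one-dimensional mixture
`a₁ N(u ⬝ m₁, σ²) + a₂ N(u ⬝ m₂, σ²)` with `σ² = uᵀ S u > 0`. Writing `β = a₁ a₂` and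
`d = u ⬝ (m₁ - m₂)`, its central moments are `M₂ = σ² + β d²` and `M₄ = 3 M₂² + β (1 - 6β) d⁴`,
so the excess kurtosis vanishes as soon as `1 - 6β = 0`, which is what `a₁ = 1/2 ± 1/√12` says.
The Gaussian moments themselves are read off the derivatives at `0` of the mgf
`t ↦ exp (b t + s t² / 2)`. -/
open scoped NNReal MatrixOrder

section GaussianMoments

open Polynomial

lemma iteratedDeriv_eval_mul_exp_eval (P Q : ℝ[X]) (n : ℕ) :
    iteratedDeriv n (fun t => P.eval t * Real.exp (Q.eval t))
      = fun t => ((fun R => derivative R + R * derivative Q)^[n] P).eval t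
          * Real.exp (Q.eval t) := by
  induction n generalizing P with
  | zero => rfl
  | succ n ih =>
    rw [iteratedDeriv_succ', Function.iterate_succ_apply, ← ih]
    congr 1
    funext t
    refine ((P.hasDerivAt t).mul (Q.hasDerivAt t).exp).deriv.trans ?_
    simp only [eval_add, eval_mul]
    ring

/-- Differentiating `R t * exp (b t + s t² / 2)` replaces `R` by `R' + R (b + s X)`, so the `n`-th
derivative of the mgf at `0` is obtained by iterating this map on `1`. -/
lemma integral_pow_gaussianReal_eq_eval (b : ℝ) (s : ℝ≥0) (n : ℕ) :
    ∫ x, x ^ n ∂gaussianReal b s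
      = ((fun R => derivative R + R * (C b + C (s : ℝ) * X))^[n] 1).eval 0 := by
  have hmgf : (fun t => Real.exp (b * t + s * t ^ 2 / 2))
      = fun t => eval t 1 * Real.exp (eval t (C b * X + C ((s : ℝ) / 2) * X ^ 2)) := by
    funext t
    simp only [eval_one, eval_add, eval_mul, eval_C, eval_X, eval_pow, one_mul]
    ring_nf
  have hQ : derivative (C b * X + C ((s : ℝ) / 2) * X ^ 2) = C b + C (s : ℝ) * X := by
    rw [derivative_add, derivative_C_mul_X, derivative_C_mul_X_pow]
    norm_num
  calc ∫ x, x ^ n ∂gaussianReal b s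
      = iteratedDeriv n (mgf (fun x => x) (gaussianReal b s)) 0 := by
        rw [iteratedDeriv_mgf_zero (by simp)]; rfl
    _ = _ := by
        rw [mgf_fun_id_gaussianReal, hmgf, iteratedDeriv_eval_mul_exp_eval, hQ]
        simp

lemma integral_sq_gaussianReal (b : ℝ) (s : ℝ≥0) :
    ∫ x, x ^ 2 ∂gaussianReal b s = b ^ 2 + s := by
  rw [integral_pow_gaussianReal_eq_eval]
  simp [Function.iterate_succ_apply', derivative_mul]
  ring

lemma integral_pow_four_gaussianReal (b : ℝ) (s : ℝ≥0) :
    ∫ x, x ^ 4 ∂gaussianReal b s = b ^ 4 + 6 * b ^ 2 * s + 3 * s ^ 2 := by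
  rw [integral_pow_gaussianReal_eq_eval]
  simp [Function.iterate_succ_apply', derivative_mul]
  ring

lemma integrable_sub_pow_gaussianReal (b c : ℝ) (s : ℝ≥0) (n : ℕ) :
    Integrable (fun x => (x - c) ^ n) (gaussianReal b s) := by
  have h := integrable_pow_of_mem_interior_integrableExpSet (X := fun x => x)
    (μ := gaussianReal (b - c) s) (by simp) n
  rw [← gaussianReal_map_sub_const, integrable_map_measure (by fun_prop) (by fun_prop)] at h
  exact h

lemma integral_sub_pow_gaussianReal (b c : ℝ) (s : ℝ≥0) (n : ℕ) :
    ∫ x, (x - c) ^ n ∂gaussianReal b s = ∫ x, x ^ n ∂gaussianReal (b - c) s := by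
  rw [← gaussianReal_map_sub_const, integral_map (by fun_prop) (by fun_prop)]

end GaussianMoments

section Mixture

variable {α E : Type*} [MeasurableSpace α] [NormedAddCommGroup E] {ν₁ ν₂ : Measure α} {a₁ a₂ : ℝ}
  {f : α → E}

lemma MeasureTheory.Integrable.ofReal_smul_add_ofReal_smul (hf₁ : Integrable f ν₁)
    (hf₂ : Integrable f ν₂) :
    Integrable f (ENNReal.ofReal a₁ • ν₁ + ENNReal.ofReal a₂ • ν₂) :=
  (hf₁.smul_measure ENNReal.ofReal_ne_top).add_measure (hf₂.smul_measure ENNReal.ofReal_ne_top)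

lemma integral_ofReal_smul_add_ofReal_smul [NormedSpace ℝ E] (ha₁ : 0 ≤ a₁) (ha₂ : 0 ≤ a₂)
    (hf₁ : Integrable f ν₁) (hf₂ : Integrable f ν₂) :
    ∫ x, f x ∂(ENNReal.ofReal a₁ • ν₁ + ENNReal.ofReal a₂ • ν₂)
      = a₁ • ∫ x, f x ∂ν₁ + a₂ • ∫ x, f x ∂ν₂ := by
  rw [integral_add_measure (hf₁.smul_measure ENNReal.ofReal_ne_top)
    (hf₂.smul_measure ENNReal.ofReal_ne_top), integral_smul_measure, integral_smul_measure,
    ENNReal.toReal_ofReal ha₁, ENNReal.toReal_ofReal ha₂]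

end Mixture

noncomputable def gaussianMixture (a₁ a₂ c₁ c₂ : ℝ) (s : ℝ≥0) : Measure ℝ :=
  ENNReal.ofReal a₁ • gaussianReal c₁ s + ENNReal.ofReal a₂ • gaussianReal c₂ s

section GaussianMixture

variable {a₁ a₂ : ℝ} (c₁ c₂ : ℝ) (s : ℝ≥0)

lemma integral_id_gaussianMixture (ha₁ : 0 ≤ a₁) (ha₂ : 0 ≤ a₂) :
    ∫ x, x ∂gaussianMixture a₁ a₂ c₁ c₂ s = a₁ * c₁ + a₂ * c₂ := by
  rw [gaussianMixture, integral_ofReal_smul_add_ofReal_smul ha₁ ha₂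
    IsGaussian.integrable_fun_id IsGaussian.integrable_fun_id]
  simp

lemma centralMoment_gaussianMixture (ha₁ : 0 ≤ a₁) (ha₂ : 0 ≤ a₂) (h : a₁ + a₂ = 1) (n : ℕ) :
    centralMoment id n (gaussianMixture a₁ a₂ c₁ c₂ s)
      = a₁ * ∫ x, x ^ n ∂gaussianReal (a₂ * (c₁ - c₂)) s
        + a₂ * ∫ x, x ^ n ∂gaussianReal (a₁ * (c₂ - c₁)) s := by
  have hc₁ : c₁ - (a₁ * c₁ + a₂ * c₂) = a₂ * (c₁ - c₂) := by linear_combination (-c₁) * h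
  have hc₂ : c₂ - (a₁ * c₁ + a₂ * c₂) = a₁ * (c₂ - c₁) := by linear_combination (-c₂) * h
  simp only [centralMoment, Pi.pow_apply, Pi.sub_apply, id]
  rw [integral_id_gaussianMixture c₁ c₂ s ha₁ ha₂, gaussianMixture,
    integral_ofReal_smul_add_ofReal_smul ha₁ ha₂ (integrable_sub_pow_gaussianReal _ _ _ _)
      (integrable_sub_pow_gaussianReal _ _ _ _),
    integral_sub_pow_gaussianReal, integral_sub_pow_gaussianReal, hc₁, hc₂, smul_eq_mul,
    smul_eq_mul]

lemma centralMoment_two_gaussianMixture (ha₁ : 0 ≤ a₁) (ha₂ : 0 ≤ a₂) (h : a₁ + a₂ = 1) :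
    centralMoment id 2 (gaussianMixture a₁ a₂ c₁ c₂ s) = s + a₁ * a₂ * (c₁ - c₂) ^ 2 := by
  rw [centralMoment_gaussianMixture c₁ c₂ s ha₁ ha₂ h, integral_sq_gaussianReal,
    integral_sq_gaussianReal]
  linear_combination (s + a₁ * a₂ * (c₁ - c₂) ^ 2) * h

lemma centralMoment_four_gaussianMixture (ha₁ : 0 ≤ a₁) (ha₂ : 0 ≤ a₂) (h : a₁ + a₂ = 1) :
    centralMoment id 4 (gaussianMixture a₁ a₂ c₁ c₂ s)
      = 3 * (s + a₁ * a₂ * (c₁ - c₂) ^ 2) ^ 2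
        + a₁ * a₂ * (1 - 6 * (a₁ * a₂)) * (c₁ - c₂) ^ 4 := by
  rw [centralMoment_gaussianMixture c₁ c₂ s ha₁ ha₂ h, integral_pow_four_gaussianReal,
    integral_pow_four_gaussianReal]
  have h₂ : a₂ = 1 - a₁ := by linear_combination h
  subst h₂
  ring

end GaussianMixture

lemma dotProduct_integral_id {ι : Type*} [Fintype ι] {μ : Measure (ι → ℝ)}
    (hμ : Integrable id μ) (u : ι → ℝ) : u ⬝ᵥ ∫ z, z ∂μ = ∫ z, u ⬝ᵥ z ∂μ := by
  have hμ' : ∀ i, Integrable (fun z : ι → ℝ => z i) μ := hμ.eval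
  simp only [dotProduct]
  rw [integral_finsetSum _ fun i _ => (hμ' i).const_mul (u i)]
  refine Finset.sum_congr rfl fun i _ => ?_
  rw [eval_integral hμ' i, integral_const_mul]

lemma integral_dotProduct_sub_integral_pow {ι : Type*} [Fintype ι] {μ : Measure (ι → ℝ)}
    (hμ : Integrable id μ) (u : ι → ℝ) (n : ℕ) :
    ∫ z, (u ⬝ᵥ (z - ∫ z, z ∂μ)) ^ n ∂μ = centralMoment id n (μ.map (u ⬝ᵥ ·)) := by
  simp only [centralMoment, Pi.pow_apply, Pi.sub_apply, id]
  rw [integral_map (by fun_prop) (by fun_prop), integral_map (by fun_prop) (by fun_prop),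
    ← dotProduct_integral_id hμ]
  simp only [dotProduct_sub]

lemma Matrix.PosSemidef.eigenvectorUnitary_mul_diagonal_sqrt_mul_star {n : Type*} [Fintype n]
    [DecidableEq n] {S : Matrix n n ℝ} (hS : S.PosSemidef) :
    (hS.1.eigenvectorUnitary : Matrix n n ℝ) *
      diagonal (((↑) : ℝ → ℝ) ∘ (√·) ∘ hS.1.eigenvalues) *
      (star hS.1.eigenvectorUnitary : Matrix n n ℝ) = CFC.sqrt S := by
  rw [CFC.sqrt_eq_cfc, cfc_nnreal_eq_real _ S, hS.1.cfc_eq]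
  simp [IsHermitian.cfc, Unitary.conjStarAlgAut_apply, Function.comp_def,
    max_eq_left (hS.eigenvalues_nonneg _)]

lemma Matrix.PosSemidef.vecMul_sqrt_dotProduct_self {n : Type*} [Fintype n] [DecidableEq n]
    {S : Matrix n n ℝ} (hS : S.PosSemidef) (u : n → ℝ) :
    (u ᵥ* CFC.sqrt S) ⬝ᵥ (u ᵥ* CFC.sqrt S) = u ⬝ᵥ (S *ᵥ u) := by
  have hsymm : u ᵥ* CFC.sqrt S = CFC.sqrt S *ᵥ u := by
    rw [← mulVec_transpose, ← conjTranspose_eq_transpose_of_trivial, ← star_eq_conjTranspose,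
      (CFC.sqrt_nonneg S).isSelfAdjoint.star_eq]
  rw [← dotProduct_mulVec, hsymm, mulVec_mulVec, CFC.sqrt_mul_sqrt_self S hS.nonneg]

lemma map_dotProduct_pi_gaussianReal {ι : Type*} [Fintype ι] (v : ι → ℝ) :
    (Measure.pi fun _ : ι => gaussianReal 0 1).map (v ⬝ᵥ ·)
      = gaussianReal 0 (v ⬝ᵥ v).toNNReal := by
  set L := innerSL ℝ (WithLp.toLp 2 v : EuclideanSpace ℝ ι)
  have hL : (v ⬝ᵥ ·) = L ∘ WithLp.toLp 2 := by
    funext w; simp [L, dotProduct, PiLp.inner_apply, mul_comm]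
  rw [hL, ← Measure.map_map (by fun_prop) (by fun_prop), map_pi_eq_stdGaussian,
    IsGaussian.eq_gaussianReal ((stdGaussian _).map L) inferInstance,
    integral_map (by fun_prop) (by fun_prop), variance_map (by fun_prop) (by fun_prop)]
  congr 2
  · exact integral_strongDual_stdGaussian L
  · rw [Function.id_comp, variance_dual_stdGaussian, innerSL_apply_norm,
      EuclideanSpace.real_norm_sq_eq]
    simp [dotProduct, sq]

section MvGaussian

variable {p : ℕ} (m : Fin p → ℝ) {S : Matrix (Fin p) (Fin p) ℝ} (hS : S.PosSemidef)

lemma map_dotProduct_mvGaussian (u : Fin p → ℝ) :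
    (mvGaussian m hS).map (u ⬝ᵥ ·) = gaussianReal (u ⬝ᵥ m) (u ⬝ᵥ (S *ᵥ u)).toNNReal := by
  have h : (u ⬝ᵥ ·) ∘ (fun w => m + CFC.sqrt S *ᵥ w)
      = (u ⬝ᵥ m + ·) ∘ ((u ᵥ* CFC.sqrt S) ⬝ᵥ ·) := by
    funext w; simp [dotProduct_add, dotProduct_mulVec]
  rw [mvGaussian, hS.eigenvectorUnitary_mul_diagonal_sqrt_mul_star,
    Measure.map_map (by fun_prop) (by fun_prop), h,
    ← Measure.map_map (by fun_prop) (by fun_prop), map_dotProduct_pi_gaussianReal,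
    gaussianReal_map_const_add, zero_add, hS.vecMul_sqrt_dotProduct_self]

lemma integrable_id_mvGaussian : Integrable id (mvGaussian m hS) := by
  refine integrable_pi_iff.2 fun i => ?_
  have h := (map_dotProduct_mvGaussian m hS (Pi.single i 1)).symm ▸
    IsGaussian.integrable_id (μ := gaussianReal _ _)
  rw [integrable_map_measure (by fun_prop) (by fun_prop)] at h
  simpa [Function.comp_def] using h

end MvGaussian

lemma map_dotProduct_mvGaussian_mixture (a₁ a₂ : ℝ) {p : ℕ} (m₁ m₂ : Fin p → ℝ)
    {S : Matrix (Fin p) (Fin p) ℝ} (hS : S.PosSemidef) (u : Fin p → ℝ) :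
    (ENNReal.ofReal a₁ • mvGaussian m₁ hS + ENNReal.ofReal a₂ • mvGaussian m₂ hS).map (u ⬝ᵥ ·)
      = gaussianMixture a₁ a₂ (u ⬝ᵥ m₁) (u ⬝ᵥ m₂) (u ⬝ᵥ (S *ᵥ u)).toNNReal := by
  rw [Measure.map_add _ _ (by fun_prop), Measure.map_smul, Measure.map_smul,
    map_dotProduct_mvGaussian, map_dotProduct_mvGaussian, gaussianMixture]

theorem stmt_15_general (p : ℕ) (a1 a2 : ℝ) (ha1 : 0 < a1) (ha2 : 0 < a2) (hsum : a1 + a2 = 1)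
    (m1 m2 : Fin p → ℝ)
    (S : Matrix (Fin p) (Fin p) ℝ) (hS : S.PosDef)
    (ha : a1 = 1 / 2 - 1 / Real.sqrt 12 ∨ a1 = 1 / 2 + 1 / Real.sqrt 12) :
    let μ := ENNReal.ofReal a1 • mvGaussian m1 hS.posSemidef
        + ENNReal.ofReal a2 • mvGaussian m2 hS.posSemidef
    let m := ∫ z, z ∂μ
    let κ := fun u : Fin p → ℝ =>
      (∫ z, (u ⬝ᵥ (z - m)) ^ 4 ∂μ) / (∫ z, (u ⬝ᵥ (z - m)) ^ 2 ∂μ) ^ 2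
    ∀ u : Fin p → ℝ, (∑ i, u i ^ 2) = 1 → κ u - 3 = 0 := by
  intro μ m κ u hu
  have hμ : Integrable id μ := (integrable_id_mvGaussian m1 _).ofReal_smul_add_ofReal_smul
    (integrable_id_mvGaussian m2 _)
  have hσ : 0 < u ⬝ᵥ (S *ᵥ u) := by
    have hu₀ : u ≠ 0 := by rintro rfl; simp at hu
    simpa using hS.dotProduct_mulVec_pos hu₀
  have hβ : a1 * a2 = 1 / 6 := by
    have h12 : (1 / Real.sqrt 12) ^ 2 = 1 / 12 := by
      rw [div_pow, one_pow, Real.sq_sqrt (by norm_num)]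
    obtain rfl : a2 = 1 - a1 := by linear_combination hsum
    rcases ha with rfl | rfl <;> linear_combination -h12
  simp only [κ, m, integral_dotProduct_sub_integral_pow hμ, μ,
    map_dotProduct_mvGaussian_mixture,
    centralMoment_four_gaussianMixture _ _ _ ha1.le ha2.le hsum,
    centralMoment_two_gaussianMixture _ _ _ ha1.le ha2.le hsum, hβ]
  have hV : (u ⬝ᵥ (S *ᵥ u)).toNNReal + 1 / 6 * (u ⬝ᵥ m1 - u ⬝ᵥ m2) ^ 2 ≠ (0 : ℝ) := by
    positivity
  field_simp
  ring

/-- if `α₁ ∈ {1/2 − 1/√12, 1/2 + 1/√12}`, then the excess kurtosis of every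
projection of the two-component Gaussian mixture vanishes. -/
theorem stmt_15 (p : ℕ) (a1 a2 : ℝ) (ha1 : 0 < a1) (ha2 : 0 < a2) (hsum : a1 + a2 = 1)
    (m1 m2 : Fin p → ℝ) (hm : m1 ≠ m2)
    (S : Matrix (Fin p) (Fin p) ℝ) (hS : S.PosDef)
    (ha : a1 = 1 / 2 - 1 / Real.sqrt 12 ∨ a1 = 1 / 2 + 1 / Real.sqrt 12) :
    let μ := ENNReal.ofReal a1 • mvGaussian m1 hS.posSemidef
        + ENNReal.ofReal a2 • mvGaussian m2 hS.posSemidef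
    let m := ∫ z, z ∂μ
    let κ := fun u : Fin p → ℝ =>
      (∫ z, (u ⬝ᵥ (z - m)) ^ 4 ∂μ) / (∫ z, (u ⬝ᵥ (z - m)) ^ 2 ∂μ) ^ 2
    ∀ u : Fin p → ℝ, (∑ i, u i ^ 2) = 1 → κ u - 3 = 0 :=
  stmt_15_general p a1 a2 ha1 ha2 hsum m1 m2 S hS ha
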